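/- If φ : M_n → M_k is given by a generalized Choi–Kraus representation φ(X) = Σ_{i=1}^m A_i X B_i with A_i ∈ M_{k,n} and B_i ∈ M_{n,k}, then ‖φ‖_cb ≤ ‖Σ_i A_i A_i*‖^{1/2} · ‖Σ_i B_i* B_i‖^{1/2}. -/

import Mathlib

open scoped ComplexOrder Matrix

/-- The amplification `id_m ⊗ φ` of a linear map on matrices. -/
noncomputable def ampl {n k : ℕ} (m : ℕ)
    (φ : Matrix (Fin n) (Fin n) ℂ →ₗ[ℂ] Matrix (Fin k) (Fin k) ℂ) :
    Matrix (Fin m × Fin n) (Fin m × Fin n) ℂ →ₗ[ℂ]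
      Matrix (Fin m × Fin k) (Fin m × Fin k) ℂ where
  toFun M := Matrix.of fun p q => φ (Matrix.of fun a b => M (p.1, a) (q.1, b)) p.2 q.2
  map_add' M N := by
    ext p q
    show φ (Matrix.of fun a b => (M + N) (p.1, a) (q.1, b)) p.2 q.2
        = φ (Matrix.of fun a b => M (p.1, a) (q.1, b)) p.2 q.2
          + φ (Matrix.of fun a b => N (p.1, a) (q.1, b)) p.2 q.2
    rw [show (Matrix.of fun a b => (M + N) (p.1, a) (q.1, b))
        = (Matrix.of fun a b => M (p.1, a) (q.1, b))
          + (Matrix.of fun a b => N (p.1, a) (q.1, b)) from rfl, map_add]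
    simp
  map_smul' c M := by
    ext p q
    show φ (Matrix.of fun a b => (c • M) (p.1, a) (q.1, b)) p.2 q.2
        = c • φ (Matrix.of fun a b => M (p.1, a) (q.1, b)) p.2 q.2
    rw [show (Matrix.of fun a b => (c • M) (p.1, a) (q.1, b))
        = c • (Matrix.of fun a b => M (p.1, a) (q.1, b)) from rfl, map_smul]
    simp

/-- Operator (spectral) norm of a square complex matrix. -/
noncomputable def opN {n : Type*} [Fintype n] [DecidableEq n] (X : Matrix n n ℂ) : ℝ :=
  ‖(Matrix.toEuclideanCLM (𝕜 := ℂ) X : EuclideanSpace ℂ n →L[ℂ] EuclideanSpace ℂ n)‖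

/-- Induced norm (w.r.t. operator norms) of a linear map between matrix algebras. -/
noncomputable def mapNorm {a b : Type*} [Fintype a] [DecidableEq a] [Fintype b] [DecidableEq b]
    (ψ : Matrix a a ℂ →ₗ[ℂ] Matrix b b ℂ) : ℝ :=
  sSup {r : ℝ | ∃ X : Matrix a a ℂ, opN X ≤ 1 ∧ r = opN (ψ X)}

/-- The completely bounded norm `sup_m ‖id_m ⊗ φ‖`. -/
noncomputable def cbNorm {n k : ℕ}
    (φ : Matrix (Fin n) (Fin n) ℂ →ₗ[ℂ] Matrix (Fin k) (Fin k) ℂ) : ℝ :=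
  ⨆ m : ℕ, mapNorm (ampl (m + 1) φ)

/-- Trace norm of a matrix: the trace of `√(XᴴX)`. -/
noncomputable def traceNorm {a b : Type*} [Fintype a] [Fintype b] [DecidableEq b]
    (X : Matrix a b ℂ) : ℝ :=
  (((Matrix.posSemidef_conjTranspose_mul_self X).1.eigenvectorUnitary.1 *
      Matrix.diagonal (((↑) : ℝ → ℂ) ∘ (√·) ∘ (Matrix.posSemidef_conjTranspose_mul_self X).1.eigenvalues) *
      (star (Matrix.posSemidef_conjTranspose_mul_self X).1.eigenvectorUnitary : Matrix b b ℂ)).trace).re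

/-- Induced trace-norm of a linear map between matrix algebras. -/
noncomputable def tMapNorm {a b : Type*} [Fintype a] [DecidableEq a] [Fintype b] [DecidableEq b]
    (ψ : Matrix a a ℂ →ₗ[ℂ] Matrix b b ℂ) : ℝ :=
  sSup {r : ℝ | ∃ X : Matrix a a ℂ, traceNorm X ≤ 1 ∧ r = traceNorm (ψ X)}

/-! For unit vectors `v, w`, Cauchy–Schwarz in each term and then over `i` gives
`|⟪Σ Aᵢ X Bᵢ v, w⟫| ≤ ‖X‖ Σ ‖Bᵢ v‖ ‖Aᵢ* w‖ ≤ ‖X‖ (Σ ‖Bᵢ v‖²)^½ (Σ ‖Aᵢ* w‖²)^½`, and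
`Σ ‖Bᵢ v‖² = ⟪Σ Bᵢ* Bᵢ v, v⟫ ≤ ‖Σ Bᵢ* Bᵢ‖`, similarly for the `Aᵢ`.
The amplification `id_p ⊗ φ` is represented by the operators `1 ⊗ Aᵢ` and `1 ⊗ Bᵢ`, and
`M ↦ 1 ⊗ M` is a ⋆-homomorphism of C⋆-algebras, hence contractive, so the bound for `id_p ⊗ φ`
is at most the bound for `φ`. -/

open RCLike
open scoped InnerProductSpace Kronecker Matrix.Norms.L2Operator

namespace ContinuousLinearMap

variable {𝕜 ι E F G H : Type*} [RCLike 𝕜]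
  [NormedAddCommGroup E] [InnerProductSpace 𝕜 E] [CompleteSpace E]
  [NormedAddCommGroup F] [InnerProductSpace 𝕜 F] [CompleteSpace F]
  [NormedAddCommGroup G] [InnerProductSpace 𝕜 G] [CompleteSpace G]
  [NormedAddCommGroup H] [InnerProductSpace 𝕜 H] [CompleteSpace H]

theorem sum_norm_sq_apply_le (s : Finset ι) (b : ι → E →L[𝕜] F) (v : E) :
    ∑ i ∈ s, ‖b i v‖ ^ 2 ≤ ‖∑ i ∈ s, adjoint (b i) ∘L b i‖ * ‖v‖ ^ 2 :=
  calc ∑ i ∈ s, ‖b i v‖ ^ 2 = re ⟪(∑ i ∈ s, adjoint (b i) ∘L b i) v, v⟫_𝕜 := by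
        simp only [sum_apply, sum_inner, map_sum, apply_norm_sq_eq_inner_adjoint_left]
    _ ≤ ‖(∑ i ∈ s, adjoint (b i) ∘L b i) v‖ * ‖v‖ := re_inner_le_norm _ _
    _ ≤ ‖∑ i ∈ s, adjoint (b i) ∘L b i‖ * ‖v‖ * ‖v‖ := by gcongr; exact le_opNorm _ _
    _ = ‖∑ i ∈ s, adjoint (b i) ∘L b i‖ * ‖v‖ ^ 2 := by ring

theorem norm_sum_comp_comp_le (s : Finset ι) (a : ι → F →L[𝕜] G) (x : E →L[𝕜] F)
    (b : ι → H →L[𝕜] E) :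
    ‖∑ i ∈ s, a i ∘L x ∘L b i‖ ≤
      √‖∑ i ∈ s, a i ∘L adjoint (a i)‖ * ‖x‖ * √‖∑ i ∈ s, adjoint (b i) ∘L b i‖ := by
  refine opNorm_le_of_re_inner_le (by positivity) fun v w hv hw => ?_
  calc re ⟪(∑ i ∈ s, a i ∘L x ∘L b i) v, w⟫_𝕜
      = ∑ i ∈ s, re ⟪x (b i v), adjoint (a i) w⟫_𝕜 := by
        simp only [sum_apply, sum_inner, map_sum, comp_apply, adjoint_inner_right]
    _ ≤ ∑ i ∈ s, ‖x‖ * (‖b i v‖ * ‖adjoint (a i) w‖) := by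
        gcongr with i
        rw [← mul_assoc]
        exact (re_inner_le_norm _ _).trans (by gcongr; exact le_opNorm _ _)
    _ ≤ ‖x‖ * (√(∑ i ∈ s, ‖b i v‖ ^ 2) * √(∑ i ∈ s, ‖adjoint (a i) w‖ ^ 2)) := by
        rw [← Finset.mul_sum]
        gcongr
        exact Real.sum_mul_le_sqrt_mul_sqrt _ _ _
    _ ≤ ‖x‖ * (√‖∑ i ∈ s, adjoint (b i) ∘L b i‖ * √‖∑ i ∈ s, a i ∘L adjoint (a i)‖) := by
        gcongr
        · simpa [hv] using sum_norm_sq_apply_le s b v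
        · simpa [hw] using sum_norm_sq_apply_le s (fun i => adjoint (a i)) w
    _ = _ := by ring

end ContinuousLinearMap

namespace Matrix

section RectangularCLM

variable {𝕜 m n p : Type*} [RCLike 𝕜] [Fintype m] [Fintype n] [Fintype p] [DecidableEq n]

/-- The rectangular counterpart of `Matrix.toEuclideanCLM`, which only covers square matrices. -/
noncomputable def toEuclideanRectCLM :
    Matrix m n 𝕜 ≃ₗ[𝕜] (EuclideanSpace 𝕜 n →L[𝕜] EuclideanSpace 𝕜 m) :=
  toEuclideanLin.trans LinearMap.toContinuousLinearMap

theorem l2_opNorm_eq_norm_toEuclideanRectCLM (A : Matrix m n 𝕜) :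
    ‖A‖ = ‖toEuclideanRectCLM A‖ := rfl

theorem toEuclideanRectCLM_mul [DecidableEq p] (A : Matrix m n 𝕜) (B : Matrix n p 𝕜) :
    toEuclideanRectCLM (A * B) = toEuclideanRectCLM A ∘L toEuclideanRectCLM B := by
  ext1 v
  exact congr($(toLpLin_mul 2 2 2 A B) v)

theorem toEuclideanRectCLM_conjTranspose [DecidableEq m] (A : Matrix m n 𝕜) :
    toEuclideanRectCLM Aᴴ = ContinuousLinearMap.adjoint (toEuclideanRectCLM A) := by
  simp only [toEuclideanRectCLM, LinearEquiv.trans_apply]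
  rw [toEuclideanLin_conjTranspose_eq_adjoint, LinearMap.adjoint_toContinuousLinearMap]

end RectangularCLM

theorem l2_opNorm_sum_mul_mul_le {𝕜 ι m n p q : Type*} [RCLike 𝕜] [Fintype ι]
    [Fintype m] [Fintype n] [Fintype p] [Fintype q]
    [DecidableEq m] [DecidableEq n] [DecidableEq p] [DecidableEq q]
    (A : ι → Matrix m n 𝕜) (X : Matrix n p 𝕜) (B : ι → Matrix p q 𝕜) :
    ‖∑ i, A i * X * B i‖ ≤ √‖∑ i, A i * (A i)ᴴ‖ * ‖X‖ * √‖∑ i, (B i)ᴴ * B i‖ := by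
  simpa only [l2_opNorm_eq_norm_toEuclideanRectCLM, map_sum, toEuclideanRectCLM_mul,
    ContinuousLinearMap.comp_assoc, toEuclideanRectCLM_conjTranspose] using
    ContinuousLinearMap.norm_sum_comp_comp_le Finset.univ (fun i => toEuclideanRectCLM (A i))
      (toEuclideanRectCLM X) (fun i => toEuclideanRectCLM (B i))

section OneKronecker

variable (P : Type*) {R n : Type*} [Fintype P] [DecidableEq P] [Fintype n] [DecidableEq n]
  [CommSemiring R] [StarRing R]

def oneKroneckerStarAlgHom : Matrix n n R →⋆ₐ[R] Matrix (P × n) (P × n) R where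
  toFun M := (1 : Matrix P P R) ⊗ₖ M
  map_one' := one_kronecker_one
  map_mul' M N := by rw [← mul_kronecker_mul, Matrix.one_mul]
  map_zero' := kronecker_zero _
  map_add' := kronecker_add _
  commutes' c := by simp [Algebra.algebraMap_eq_smul_one, kronecker_smul]
  map_star' M := by simp [star_eq_conjTranspose, conjTranspose_kronecker]

theorem sum_one_kronecker_mul_one_kronecker {ι m : Type*} [Fintype ι] [Fintype m]
    (A : ι → Matrix n m R) (B : ι → Matrix m n R) :
    ∑ i, (1 : Matrix P P R) ⊗ₖ A i * ((1 : Matrix P P R) ⊗ₖ B i) =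
      oneKroneckerStarAlgHom P (∑ i, A i * B i) := by
  rw [map_sum]
  refine Finset.sum_congr rfl fun i _ => ?_
  exact (mul_kronecker_mul _ _ _ _).symm.trans (by rw [Matrix.one_mul]; rfl)

end OneKronecker

theorem norm_sum_one_kronecker_mul_mul_le (P : Type*) {ι m n : Type*} [Fintype P] [DecidableEq P]
    [Fintype ι] [Fintype m] [DecidableEq m] [Fintype n] [DecidableEq n]
    (A : ι → Matrix m n ℂ) (X : Matrix (P × n) (P × n) ℂ) (B : ι → Matrix n m ℂ) :
    ‖∑ i, (1 : Matrix P P ℂ) ⊗ₖ A i * X * ((1 : Matrix P P ℂ) ⊗ₖ B i)‖ ≤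
      √‖∑ i, A i * (A i)ᴴ‖ * ‖X‖ * √‖∑ i, (B i)ᴴ * B i‖ := by
  have hA : ‖∑ i, (1 : Matrix P P ℂ) ⊗ₖ A i * ((1 : Matrix P P ℂ) ⊗ₖ A i)ᴴ‖ ≤
      ‖∑ i, A i * (A i)ᴴ‖ := by
    simpa only [conjTranspose_kronecker, conjTranspose_one, sum_one_kronecker_mul_one_kronecker]
      using NonUnitalStarAlgHom.norm_apply_le (oneKroneckerStarAlgHom P) (∑ i, A i * (A i)ᴴ)
  have hB : ‖∑ i, ((1 : Matrix P P ℂ) ⊗ₖ B i)ᴴ * ((1 : Matrix P P ℂ) ⊗ₖ B i)‖ ≤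
      ‖∑ i, (B i)ᴴ * B i‖ := by
    simpa only [conjTranspose_kronecker, conjTranspose_one, sum_one_kronecker_mul_one_kronecker]
      using NonUnitalStarAlgHom.norm_apply_le (oneKroneckerStarAlgHom P) (∑ i, (B i)ᴴ * B i)
  refine (l2_opNorm_sum_mul_mul_le _ X _).trans ?_
  exact mul_le_mul (mul_le_mul_of_nonneg_right (Real.sqrt_le_sqrt hA) (norm_nonneg _))
    (Real.sqrt_le_sqrt hB) (Real.sqrt_nonneg _) (mul_nonneg (Real.sqrt_nonneg _) (norm_nonneg _))

end Matrix

open Matrix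

theorem ampl_eq_sum_kronecker {n k : ℕ} {ι : Type*} [Fintype ι] (p : ℕ)
    (φ : Matrix (Fin n) (Fin n) ℂ →ₗ[ℂ] Matrix (Fin k) (Fin k) ℂ)
    (A : ι → Matrix (Fin k) (Fin n) ℂ) (B : ι → Matrix (Fin n) (Fin k) ℂ)
    (hrep : ∀ X, φ X = ∑ i, A i * X * B i) (M : Matrix (Fin p × Fin n) (Fin p × Fin n) ℂ) :
    ampl p φ M =
      ∑ i, (1 : Matrix (Fin p) (Fin p) ℂ) ⊗ₖ A i * M * ((1 : Matrix (Fin p) (Fin p) ℂ) ⊗ₖ B i) := by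
  ext ⟨r, c⟩ ⟨s, d⟩
  simp [ampl, hrep, Matrix.sum_apply, mul_apply, one_apply, Fintype.sum_prod_type, ite_mul]

theorem opN_eq_l2_opNorm {a : Type*} [Fintype a] [DecidableEq a] (X : Matrix a a ℂ) :
    opN X = ‖X‖ := rfl

theorem mapNorm_le {a b : Type*} [Fintype a] [DecidableEq a] [Fintype b] [DecidableEq b]
    (ψ : Matrix a a ℂ →ₗ[ℂ] Matrix b b ℂ) {C : ℝ} (hC : 0 ≤ C)
    (h : ∀ X, opN X ≤ 1 → opN (ψ X) ≤ C) : mapNorm ψ ≤ C :=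
  Real.sSup_le (by rintro _ ⟨X, hX, rfl⟩; exact h X hX) hC

/-- For any generalized Choi-Kraus representation `φ(X) = Σ A_i X B_i`,
`‖φ‖_cb ≤ ‖Σ A_i A_i*‖^(1/2) ⬝ ‖Σ B_i* B_i‖^(1/2)`. -/
theorem cbNorm_le_choiKraus_bound {n k m : ℕ}
    (φ : Matrix (Fin n) (Fin n) ℂ →ₗ[ℂ] Matrix (Fin k) (Fin k) ℂ)
    (A : Fin m → Matrix (Fin k) (Fin n) ℂ) (B : Fin m → Matrix (Fin n) (Fin k) ℂ)
    (hrep : ∀ X, φ X = ∑ i, A i * X * B i) :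
    cbNorm φ ≤ Real.sqrt (opN (∑ i, A i * (A i)ᴴ)) *
      Real.sqrt (opN (∑ i, (B i)ᴴ * B i)) := by
  refine Real.iSup_le (fun p => mapNorm_le _ (by positivity) fun X hX => ?_) (by positivity)
  simp only [opN_eq_l2_opNorm] at hX ⊢
  rw [ampl_eq_sum_kronecker _ φ A B hrep]
  refine (norm_sum_one_kronecker_mul_mul_le _ A X B).trans ?_
  rw [mul_right_comm]
  exact mul_le_of_le_one_right (by positivity) hX
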